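/- (Both agents selecting the highest-rate process is a Nash equilibrium of the two-agent Poisson-picking pool.) Let m ≥ 2, let λ₁, …, λ_m > 0 with λ₁ ≥ λ_j for every j, and define A : {1,…,m}² → ℝ by A(j,k) = P₍>₎(λ_j,λ_k) − P₍<₎(λ_j,λ_k) for j ≠ k and A(j,j) = 0. Then for every probability vector s : {1,…,m} → [0,1] with Σ_j s(j) = 1, the expected payoff Σ_j s(j)·A(j,1) of playing s against an opponent who always chooses process 1 satisfies Σ_j s(j)·A(j,1) ≤ 0 = A(1,1); hence no agent can profit by deviating when both always choose process 1. -/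

import Mathlib

/-- The Poisson probability mass function with rate `l`. -/
noncomputable def poissonPMF (l : ℝ) (i : ℕ) : ℝ :=
  Real.exp (-l) * l ^ i / (Nat.factorial i)

/-- Probability that the first of two independent Poisson counts (rates `l`, `m`)
strictly exceeds the second. -/
noncomputable def Pgt (l m : ℝ) : ℝ :=
  ∑' p : ℕ × ℕ, if p.2 < p.1 then poissonPMF l p.1 * poissonPMF m p.2 else 0

/-- Probability that the first of two independent Poisson counts (rates `l`, `m`)
is strictly less than the second. -/
noncomputable def Plt (l m : ℝ) : ℝ :=
  ∑' p : ℕ × ℕ, if p.1 < p.2 then poissonPMF l p.1 * poissonPMF m p.2 else 0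

lemma pois_nonneg (l : ℝ) (hl : 0 ≤ l) (i : ℕ) : 0 ≤ poissonPMF l i := by
  unfold poissonPMF; positivity

lemma pois_summable (l : ℝ) : Summable (poissonPMF l) := by
  have h := (Real.summable_pow_div_factorial l).mul_left (Real.exp (-l))
  apply h.congr
  intro i
  unfold poissonPMF
  ring

lemma prod_summable (l m : ℝ) (hl : 0 ≤ l) (hm : 0 ≤ m) :
    Summable (fun p : ℕ × ℕ => poissonPMF l p.1 * poissonPMF m p.2) :=
  (pois_summable l).mul_of_nonneg (pois_summable m) (pois_nonneg l hl) (pois_nonneg m hm)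

lemma ite_summable (l m : ℝ) (hl : 0 ≤ l) (hm : 0 ≤ m) (P : ℕ × ℕ → Prop) [DecidablePred P] :
    Summable (fun p : ℕ × ℕ => if P p then poissonPMF l p.1 * poissonPMF m p.2 else 0) := by
  apply Summable.of_nonneg_of_le _ _ (prod_summable l m hl hm)
  · intro p
    split
    · exact mul_nonneg (pois_nonneg l hl _) (pois_nonneg m hm _)
    · exact le_refl 0
  · intro p
    split
    · exact le_refl _
    · exact mul_nonneg (pois_nonneg l hl _) (pois_nonneg m hm _)

lemma key (l m : ℝ) (hl : 0 ≤ l) (hm : 0 ≤ m) (hlm : l ≤ m) : Pgt l m ≤ Plt l m := by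
  unfold Pgt Plt
  rw [← (Equiv.prodComm ℕ ℕ).tsum_eq
    (fun p : ℕ × ℕ => if p.2 < p.1 then poissonPMF l p.1 * poissonPMF m p.2 else 0)]
  apply Summable.tsum_le_tsum _ _ (ite_summable l m hl hm _)
  · intro p
    simp only [Equiv.prodComm_apply, Prod.fst_swap, Prod.snd_swap]
    by_cases h : p.1 < p.2
    · simp only [h, if_pos]
      have hpow : l ^ p.2 * m ^ p.1 ≤ l ^ p.1 * m ^ p.2 := by
        obtain ⟨d, hd⟩ : ∃ d, p.2 = p.1 + d := ⟨p.2 - p.1, by omega⟩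
        rw [hd]
        rw [pow_add, pow_add]
        calc l ^ p.1 * l ^ d * m ^ p.1 = (l ^ p.1 * m ^ p.1) * l ^ d := by ring
          _ ≤ (l ^ p.1 * m ^ p.1) * m ^ d :=
              mul_le_mul_of_nonneg_left (pow_le_pow_left₀ hl hlm d) (by positivity)
          _ = l ^ p.1 * (m ^ p.1 * m ^ d) := by ring
      have e1 : poissonPMF l p.2 * poissonPMF m p.1 =
          (Real.exp (-l) * Real.exp (-m) / ((p.1).factorial * (p.2).factorial)) *
            (l ^ p.2 * m ^ p.1) := by unfold poissonPMF; ring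
      have e2 : poissonPMF l p.1 * poissonPMF m p.2 =
          (Real.exp (-l) * Real.exp (-m) / ((p.1).factorial * (p.2).factorial)) *
            (l ^ p.1 * m ^ p.2) := by unfold poissonPMF; ring
      rw [e1, e2]
      apply mul_le_mul_of_nonneg_left hpow
      positivity
    · simp [h]
  · apply Summable.congr ((ite_summable l m hl hm (fun p => p.2 < p.1)).comp_injective
      (Equiv.prodComm ℕ ℕ).symm.injective)
    intro p
    simp
    congr

/-- Both agents selecting the highest-rate process is a Nash equilibrium of the
two-agent Poisson-picking pool. Processes are indexed by `Fin m` (index `0` playing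
the role of process 1, of maximal rate), `A j k` is the expected payoff of an agent
choosing process `j` against an opponent choosing process `k`. For every mixed
strategy `s`, the expected payoff of playing `s` against an opponent who always
chooses process `0` is at most `0 = A 0 0`:  no agent can profit by deviating when
both always choose process `0`. -/
theorem greedy_pair_is_nash_equilibrium
    (m : ℕ) [NeZero m] (hm : 2 ≤ m)
    (lam : Fin m → ℝ) (hpos : ∀ j, 0 < lam j) (hmax : ∀ j, lam j ≤ lam 0)
    (A : Fin m → Fin m → ℝ)
    (hA : ∀ j k : Fin m, A j k =
      if j = k then 0 else Pgt (lam j) (lam k) - Plt (lam j) (lam k))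
    (s : Fin m → ℝ) (hs0 : ∀ j, 0 ≤ s j) (hs1 : ∀ j, s j ≤ 1) (hsum : ∑ j, s j = 1) :
    ∑ j, s j * A j 0 ≤ 0 ∧ (0 : ℝ) = A 0 0 := by
  have hA00 : A 0 0 = 0 := by rw [hA]; simp
  refine ⟨?_, hA00.symm⟩
  apply Finset.sum_nonpos
  intro j _
  have hAj0 : A j 0 ≤ 0 := by
    rw [hA]
    split
    · exact le_refl 0
    · have := key (lam j) (lam 0) (hpos j).le (hpos 0).le (hmax j)
      linarith
  exact mul_nonpos_of_nonneg_of_nonpos (hs0 j) hAj0
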